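/- arXiv:1812.08233 — 4 statements merged into one kernel-verified Lean document; each statement's English description precedes it below -/
import Mathlib

section
/- For every b ∈ ℝ^p, the worst-case shift-perturbed risk equals the causally regularized risk: sup over all square-integrable random vectors δ : Ω → ℝ^r with E[ε δᵀ] = 0 and γE[AAᵀ] − E[δδᵀ] positive semidefinite of E[(Y^{Mδ} − (X^{Mδ})ᵀ b)²] is equal to E[((Y − Xᵀb) − E[Y − Xᵀb | σ(A)])²] + γ · E[(E[Y − Xᵀb | σ(A)])²]; moreover the supremum is attained at δ = √γ · A. -/
/-! The residual of the perturbed system is affine in the shift, `res (M x) = c ⬝ᵥ ε + w ⬝ᵥ x`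
with `w = cᵀ M`. As `ε` is centred and independent of `A`, `E[res | σ(A)] = w ⬝ᵥ A`, so the
regularized risk is `E[(c ⬝ᵥ ε)²] + γ wᵀ E[AAᵀ] w`. For admissible `δ` the cross term
`E[(c ⬝ᵥ ε)(w ⬝ᵥ δ)]` vanishes, so the perturbed risk is `E[(c ⬝ᵥ ε)²] + wᵀ E[δδᵀ] w`, and the
Loewner bound `E[δδᵀ] ⪯ γ E[AAᵀ]` gives the inequality, with equality at `δ = √γ A`. -/

open MeasureTheory ProbabilityTheory Matrix

lemma mulVec_apply_sub_sum_smul {n ι : Type*} [Fintype n] [Fintype ι]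
    (K : Matrix n n ℝ) (k : n) (f : ι → n) (b : ι → ℝ) (u : n → ℝ) :
    (K *ᵥ u) k - ∑ i, b i * (K *ᵥ u) (f i) = (K k - ∑ i, b i • K (f i)) ⬝ᵥ u := by
  simp only [sub_dotProduct, sum_dotProduct, smul_dotProduct, smul_eq_mul, mulVec]

lemma dotProduct_mulVec_le_of_posSemidef_sub {ι : Type*} [Fintype ι] {S T : Matrix ι ι ℝ}
    (h : (S - T).PosSemidef) (w : ι → ℝ) : w ⬝ᵥ (T *ᵥ w) ≤ w ⬝ᵥ (S *ᵥ w) := by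
  have := h.dotProduct_mulVec_nonneg w
  rw [star_trivial, sub_mulVec, dotProduct_sub] at this
  linarith

lemma condExp_comp_add_comp_ae_eq {Ω E F : Type*} {mΩ : MeasurableSpace Ω} {μ : Measure Ω}
    [IsFiniteMeasure μ] [MeasurableSpace E] [MeasurableSpace F] {X : Ω → E} {Y : Ω → F}
    (hX : Measurable X) (hY : Measurable Y) (hXY : IndepFun X Y μ) {φ : E → ℝ} {ψ : F → ℝ}
    (hφ : Measurable φ) (hψ : Measurable ψ) (hφX : Integrable (fun ω => φ (X ω)) μ)
    (hψY : Integrable (fun ω => ψ (Y ω)) μ) :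
    μ[fun ω => φ (X ω) + ψ (Y ω) | MeasurableSpace.comap Y inferInstance]
      =ᵐ[μ] fun ω => ∫ ω', φ (X ω') ∂μ + ψ (Y ω) := by
  have : IsFiniteMeasure (μ.trim hY.comap_le) := isFiniteMeasure_trim hY.comap_le
  have hφX_cond : μ[fun ω => φ (X ω) | MeasurableSpace.comap Y inferInstance]
      =ᵐ[μ] fun _ => ∫ ω', φ (X ω') ∂μ :=
    condExp_indep_eq hX.comap_le hY.comap_le
      (hφ.comp (Measurable.of_comap_le le_rfl)).stronglyMeasurable
      ((IndepFun_iff_Indep X Y μ).mp hXY)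
  have hψY_cond : μ[fun ω => ψ (Y ω) | MeasurableSpace.comap Y inferInstance]
      = fun ω => ψ (Y ω) :=
    condExp_of_stronglyMeasurable hY.comap_le
      (hψ.comp (Measurable.of_comap_le le_rfl)).stronglyMeasurable hψY
  refine (condExp_add hφX hψY _).trans ?_
  rw [hψY_cond]
  filter_upwards [hφX_cond] with ω hφω
  rw [Pi.add_apply, hφω]

section Moments

variable {Ω ι κ : Type*} {mΩ : MeasurableSpace Ω} {μ : Measure Ω}

noncomputable def crossMoment (μ : Measure Ω) (X : Ω → κ → ℝ) (Y : Ω → ι → ℝ) : Matrix κ ι ℝ :=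
  Matrix.of fun i j => ∫ ω, X ω i * Y ω j ∂μ

lemma crossMoment_smul_left (c : ℝ) (X : Ω → κ → ℝ) (Y : Ω → ι → ℝ) :
    crossMoment μ (c • X) Y = c • crossMoment μ X Y := by
  ext i j
  simp only [crossMoment, of_apply, Matrix.smul_apply, Pi.smul_apply, smul_eq_mul, mul_assoc,
    integral_const_mul]

lemma crossMoment_smul_right (c : ℝ) (X : Ω → κ → ℝ) (Y : Ω → ι → ℝ) :
    crossMoment μ X (c • Y) = c • crossMoment μ X Y := by
  ext i j
  simp only [crossMoment, of_apply, Matrix.smul_apply, Pi.smul_apply, smul_eq_mul,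
    mul_left_comm _ c, integral_const_mul]

lemma crossMoment_eq_zero_of_indepFun {X : Ω → κ → ℝ} {Y : Ω → ι → ℝ} (hXY : IndepFun X Y μ)
    (hX : ∀ i, AEStronglyMeasurable (fun ω => X ω i) μ)
    (hY : ∀ j, AEStronglyMeasurable (fun ω => Y ω j) μ) (hX0 : ∀ i, ∫ ω, X ω i ∂μ = 0) :
    crossMoment μ X Y = 0 := by
  ext i j
  have hXY_ij := (hXY.comp (measurable_pi_apply i) (measurable_pi_apply j))
  simpa [crossMoment, Function.comp_def, hX0 i] using
    hXY_ij.integral_fun_mul_eq_mul_integral (hX i) (hY j)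

variable [Fintype ι] [Fintype κ]

lemma memLp_dotProduct {X : Ω → ι → ℝ} (hX : ∀ i, MemLp (fun ω => X ω i) 2 μ) (u : ι → ℝ) :
    MemLp (fun ω => u ⬝ᵥ X ω) 2 μ :=
  memLp_finsetSum _ fun i _ => (hX i).const_mul (u i)

lemma integral_dotProduct {X : Ω → ι → ℝ} (hX : ∀ i, Integrable (fun ω => X ω i) μ)
    (u : ι → ℝ) : ∫ ω, u ⬝ᵥ X ω ∂μ = u ⬝ᵥ fun i => ∫ ω, X ω i ∂μ := by
  simp only [dotProduct]
  rw [integral_finsetSum _ fun i _ => (hX i).const_mul (u i)]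
  simp only [integral_const_mul]

lemma integral_dotProduct_mul_dotProduct {X : Ω → κ → ℝ} {Y : Ω → ι → ℝ}
    (hX : ∀ i, MemLp (fun ω => X ω i) 2 μ) (hY : ∀ j, MemLp (fun ω => Y ω j) 2 μ)
    (u : κ → ℝ) (v : ι → ℝ) :
    ∫ ω, (u ⬝ᵥ X ω) * (v ⬝ᵥ Y ω) ∂μ = u ⬝ᵥ (crossMoment μ X Y *ᵥ v) := by
  have hXY : ∀ i j, Integrable (fun ω => X ω i * Y ω j) μ := fun i j =>
    (hX i).integrable_mul (hY j)
  have expand : ∀ ω, (u ⬝ᵥ X ω) * (v ⬝ᵥ Y ω) = ∑ i, u i * ∑ j, v j * (X ω i * Y ω j) := by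
    intro ω
    rw [dotProduct, dotProduct, Finset.sum_mul_sum]
    simp only [Finset.mul_sum]
    exact Finset.sum_congr rfl fun i _ => Finset.sum_congr rfl fun j _ => by ring
  simp_rw [expand]
  rw [integral_finsetSum _ fun i _ =>
    (integrable_finsetSum _ fun j _ => (hXY i j).const_mul (v j)).const_mul (u i)]
  refine Finset.sum_congr rfl fun i _ => ?_
  rw [integral_const_mul, integral_finsetSum _ fun j _ => (hXY i j).const_mul (v j)]
  simp only [integral_const_mul]
  simp only [mulVec, dotProduct, crossMoment, of_apply, mul_comm (v _)]

lemma integral_add_sq_of_integral_mul_eq_zero {f g : Ω → ℝ} (hf : MemLp f 2 μ)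
    (hg : MemLp g 2 μ) (hfg : ∫ ω, f ω * g ω ∂μ = 0) :
    ∫ ω, (f ω + g ω) ^ 2 ∂μ = ∫ ω, f ω ^ 2 ∂μ + ∫ ω, g ω ^ 2 ∂μ := by
  have expand : ∀ ω, (f ω + g ω) ^ 2 = f ω ^ 2 + 2 * (f ω * g ω) + g ω ^ 2 := fun ω => by ring
  have hfg_int : Integrable (fun ω => 2 * (f ω * g ω)) μ := (hf.integrable_mul hg).const_mul 2
  have hf_hfg_int : Integrable (fun ω => f ω ^ 2 + 2 * (f ω * g ω)) μ :=
    hf.integrable_sq.add hfg_int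
  simp_rw [expand]
  rw [integral_add hf_hfg_int hg.integrable_sq, integral_add hf.integrable_sq hfg_int,
    integral_const_mul, hfg, mul_zero, add_zero]

lemma integral_sq_dotProduct_add_dotProduct {X : Ω → κ → ℝ} {Y : Ω → ι → ℝ}
    (hX : ∀ i, MemLp (fun ω => X ω i) 2 μ) (hY : ∀ j, MemLp (fun ω => Y ω j) 2 μ)
    (hXY : crossMoment μ X Y = 0) (u : κ → ℝ) (v : ι → ℝ) :
    ∫ ω, (u ⬝ᵥ X ω + v ⬝ᵥ Y ω) ^ 2 ∂μ
      = ∫ ω, (u ⬝ᵥ X ω) ^ 2 ∂μ + v ⬝ᵥ (crossMoment μ Y Y *ᵥ v) := by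
  rw [integral_add_sq_of_integral_mul_eq_zero (memLp_dotProduct hX u) (memLp_dotProduct hY v)
    (by rw [integral_dotProduct_mul_dotProduct hX hY, hXY, zero_mulVec, dotProduct_zero])]
  simp_rw [sq]
  rw [integral_dotProduct_mul_dotProduct hY hY]

lemma condExp_dotProduct_add_dotProduct_ae_eq [IsFiniteMeasure μ] {X : Ω → κ → ℝ}
    {Y : Ω → ι → ℝ} (hXm : Measurable X) (hYm : Measurable Y) (hXY : IndepFun X Y μ)
    (hX : ∀ i, Integrable (fun ω => X ω i) μ) (hY : ∀ j, Integrable (fun ω => Y ω j) μ)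
    (hX0 : ∀ i, ∫ ω, X ω i ∂μ = 0) (u : κ → ℝ) (v : ι → ℝ) :
    μ[fun ω => u ⬝ᵥ X ω + v ⬝ᵥ Y ω | MeasurableSpace.comap Y inferInstance]
      =ᵐ[μ] fun ω => v ⬝ᵥ Y ω := by
  filter_upwards [condExp_comp_add_comp_ae_eq (φ := (u ⬝ᵥ ·)) (ψ := (v ⬝ᵥ ·)) hXm hYm hXY
    (by fun_prop) (by fun_prop)
    (integrable_finsetSum _ fun i _ => (hX i).const_mul (u i))
    (integrable_finsetSum _ fun j _ => (hY j).const_mul (v j))] with ω hω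
  rw [hω, integral_dotProduct hX, show (fun i => ∫ ω, X ω i ∂μ) = 0 from funext hX0,
    dotProduct_zero, zero_add]

end Moments

/-- Anchor regression duality (Rothenhäusler et al., Th. 1): for every `b`, the worst-case risk
over shift perturbations `v = M δ` with `E[ε δᵀ] = 0` and `E[δ δᵀ] ⪯ γ E[A Aᵀ]` equals the
causally regularized risk, and the supremum is attained at `δ = √γ · A`. -/
theorem anchor_regression_worst_case_duality
    {Ω : Type*} [MeasureSpace Ω] [IsProbabilityMeasure (ℙ : Measure Ω)]
    (p q r : ℕ)
    (B : Matrix (Fin (p + 1 + q)) (Fin (p + 1 + q)) ℝ)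
    (M : Matrix (Fin (p + 1 + q)) (Fin r) ℝ)
    (A : Ω → Fin r → ℝ) (ε : Ω → Fin (p + 1 + q) → ℝ)
    (hAmeas : Measurable A) (hεmeas : Measurable ε)
    (hA2 : ∀ j, MemLp (fun ω => A ω j) 2 ℙ)
    (hε2 : ∀ i, MemLp (fun ω => ε ω i) 2 ℙ)
    (hεmean : ∀ i, ∫ ω, ε ω i ∂ℙ = 0)
    (hIndep : IndepFun ε A ℙ)
    (γ : ℝ) (hγ : 0 ≤ γ) (b : Fin p → ℝ)
    -- residual `Y^v - (X^v)ᵀ b` of the shift-perturbed system `Z^v = (I-B)⁻¹ (ε + v)`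
    (res : (Ω → Fin (p + 1 + q) → ℝ) → Ω → ℝ)
    (hres : ∀ v ω, res v ω =
      (1 - B)⁻¹.mulVec (ε ω + v ω) ⟨p, by omega⟩
        - ∑ i : Fin p, b i * (1 - B)⁻¹.mulVec (ε ω + v ω) (Fin.castLE (by omega) i))
    -- conditional expectation `E[Y - Xᵀ b | σ(A)]` for the unperturbed system (`v = M A`)
    (g : Ω → ℝ)
    (hg : g = (ℙ : Measure Ω)[res (fun ω => M.mulVec (A ω)) |
        MeasurableSpace.comap A inferInstance])
    -- admissible shift-generating random vectors `δ`
    (admissible : (Ω → Fin r → ℝ) → Prop)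
    (hadm : ∀ δ : Ω → Fin r → ℝ, admissible δ ↔
      ((∀ j, MemLp (fun ω => δ ω j) 2 ℙ) ∧
        (∀ i j, ∫ ω, ε ω i * δ ω j ∂ℙ = 0) ∧
        (γ • (Matrix.of fun i j => ∫ ω, A ω i * A ω j ∂ℙ)
          - Matrix.of fun i j => ∫ ω, δ ω i * δ ω j ∂ℙ).PosSemidef)) :
    (∀ δ : Ω → Fin r → ℝ, admissible δ →
        ∫ ω, (res (fun ω' => M.mulVec (δ ω')) ω) ^ 2 ∂ℙ
          ≤ ∫ ω, (res (fun ω' => M.mulVec (A ω')) ω - g ω) ^ 2 ∂ℙ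
              + γ * ∫ ω, (g ω) ^ 2 ∂ℙ) ∧
    admissible (fun ω j => Real.sqrt γ * A ω j) ∧
    ∫ ω, (res (fun ω' => M.mulVec (fun j => Real.sqrt γ * A ω' j)) ω) ^ 2 ∂ℙ
      = ∫ ω, (res (fun ω' => M.mulVec (A ω')) ω - g ω) ^ 2 ∂ℙ
          + γ * ∫ ω, (g ω) ^ 2 ∂ℙ := by
  set c := (1 - B)⁻¹ ⟨p, by omega⟩ - ∑ i : Fin p, b i • (1 - B)⁻¹ (Fin.castLE (by omega) i)
  set w := c ᵥ* M
  have hres_eq (x : Ω → Fin r → ℝ) :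
      res (fun ω => M *ᵥ x ω) = fun ω => c ⬝ᵥ ε ω + w ⬝ᵥ x ω := by
    funext ω
    rw [hres, mulVec_apply_sub_sum_smul, dotProduct_add, dotProduct_mulVec]
  have hadm' (δ : Ω → Fin r → ℝ) : admissible δ ↔ (∀ j, MemLp (fun ω => δ ω j) 2 ℙ) ∧
      crossMoment ℙ ε δ = 0 ∧ (γ • crossMoment ℙ A A - crossMoment ℙ δ δ).PosSemidef := by
    rw [hadm, ← Matrix.ext_iff]
    rfl
  have hg_eq : g =ᵐ[ℙ] fun ω => w ⬝ᵥ A ω := hg ▸ hres_eq A ▸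
    condExp_dotProduct_add_dotProduct_ae_eq hεmeas hAmeas hIndep
      (fun i => (hε2 i).integrable one_le_two) (fun j => (hA2 j).integrable one_le_two) hεmean c w
  have hεA : crossMoment ℙ ε A = 0 := crossMoment_eq_zero_of_indepFun hIndep
    (fun i => (hε2 i).aestronglyMeasurable) (fun j => (hA2 j).aestronglyMeasurable) hεmean
  have perturbed_risk (δ : Ω → Fin r → ℝ) (hδ : ∀ j, MemLp (fun ω => δ ω j) 2 ℙ)
      (hεδ : crossMoment ℙ ε δ = 0) :
      ∫ ω, (res (fun ω' => M *ᵥ δ ω') ω) ^ 2 ∂ℙ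
        = ∫ ω, (c ⬝ᵥ ε ω) ^ 2 ∂ℙ + w ⬝ᵥ (crossMoment ℙ δ δ *ᵥ w) := by
    rw [hres_eq]
    exact integral_sq_dotProduct_add_dotProduct hε2 hδ hεδ c w
  have regularized_risk : ∫ ω, (res (fun ω' => M *ᵥ A ω') ω - g ω) ^ 2 ∂ℙ
      + γ * ∫ ω, (g ω) ^ 2 ∂ℙ
        = ∫ ω, (c ⬝ᵥ ε ω) ^ 2 ∂ℙ + w ⬝ᵥ ((γ • crossMoment ℙ A A) *ᵥ w) := by
    have hnoise : ∫ ω, (res (fun ω' => M *ᵥ A ω') ω - g ω) ^ 2 ∂ℙ = ∫ ω, (c ⬝ᵥ ε ω) ^ 2 ∂ℙ :=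
      integral_congr_ae (hg_eq.mono fun ω hω => by simp only [hres_eq, hω, add_sub_cancel_right])
    have hanchor : ∫ ω, (g ω) ^ 2 ∂ℙ = w ⬝ᵥ (crossMoment ℙ A A *ᵥ w) := by
      rw [integral_congr_ae (hg_eq.mono fun ω hω => congrArg (· ^ 2) hω)]
      simp_rw [sq]
      exact integral_dotProduct_mul_dotProduct hA2 hA2 w w
    rw [hnoise, hanchor, smul_mulVec, dotProduct_smul, smul_eq_mul]
  have hδ_star : (fun ω j => √γ * A ω j) = √γ • A := rfl
  have hδ_star_moment : crossMoment ℙ (√γ • A) (√γ • A) = γ • crossMoment ℙ A A := by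
    rw [crossMoment_smul_left, crossMoment_smul_right, smul_smul, Real.mul_self_sqrt hγ]
  have hδ_star_adm : admissible (√γ • A) := (hadm' _).2
    ⟨fun j => (hA2 j).const_mul _, by rw [crossMoment_smul_right, hεA, smul_zero],
      by rw [hδ_star_moment, sub_self]; exact .zero⟩
  refine ⟨fun δ hδ => ?_, hδ_star ▸ hδ_star_adm, ?_⟩
  · obtain ⟨hδ2, hεδ, hpsd⟩ := (hadm' δ).1 hδ
    rw [perturbed_risk δ hδ2 hεδ, regularized_risk]
    exact (add_le_add_iff_left _).2 (dotProduct_mulVec_le_of_posSemidef_sub hpsd w)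
  · obtain ⟨hδ2, hεδ, -⟩ := (hadm' _).1 hδ_star_adm
    rw [regularized_risk, ← hδ_star_moment]
    exact perturbed_risk _ hδ2 hεδ
end

section
/- Invariant Causal Prediction controls false positive causal selections: ℙ({ω : Ŝ(ω) ⊆ S*}) ≥ 1 − α, where Ŝ(ω) is the intersection of all subsets S ⊆ {1,…,p} that are not rejected at ω (with Ŝ(ω) := ∅ if every subset is rejected at ω). -/
open MeasureTheory ProbabilityTheory
open scoped Classical

/-! Whenever the test for `S*` does not reject, `S*` is one of the intersected sets, so `Ŝ ⊆ S*`;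
hence `{Ŝ ⊆ S*}` contains the complement of `R_{S*}`, whose probability is at least `1 - α`. -/

lemma one_sub_toReal_measure_le_toReal_measure_compl {Ω : Type*} [MeasurableSpace Ω]
    (μ : Measure Ω) [IsProbabilityMeasure μ] (s : Set Ω) :
    1 - (μ s).toReal ≤ (μ sᶜ).toReal := by
  have hcover : μ.real Set.univ ≤ μ.real s + μ.real sᶜ := by
    simpa only [Set.union_compl_self] using measureReal_union_le (μ := μ) s sᶜ
  rw [probReal_univ] at hcover
  simp only [measureReal_def] at hcover
  linarith

lemma ite_biInter_nonrejected_subset {Ω ι α : Type*} (R : ι → Set Ω) (T : ι → Set α)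
    {ω : Ω} [Decidable (∀ j, ω ∈ R j)] {i : ι} (hi : ω ∉ R i) :
    (if ∀ j, ω ∈ R j then ∅ else ⋂ j ∈ {j | ω ∉ R j}, T j) ⊆ T i := by
  rw [if_neg fun hall => hi (hall i)]
  exact Set.biInter_subset_of_mem hi

theorem icp_false_positive_control_general
    {Ω : Type*} [MeasureSpace Ω] [IsProbabilityMeasure (ℙ : Measure Ω)]
    (p : ℕ)
    (R : Finset (Fin p) → Set Ω)
    (Sstar : Finset (Fin p))
    (α : ℝ)
    (hvalid : (ℙ (R Sstar)).toReal ≤ α)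
    (Shat : Ω → Set (Fin p))
    (hShat : ∀ ω, Shat ω =
      if ∀ S : Finset (Fin p), ω ∈ R S then (∅ : Set (Fin p))
      else ⋂ S ∈ {S : Finset (Fin p) | ω ∉ R S}, (S : Set (Fin p))) :
    1 - α ≤ (ℙ {ω | Shat ω ⊆ (Sstar : Set (Fin p))}).toReal := by
  have hsub : (R Sstar)ᶜ ⊆ {ω | Shat ω ⊆ (Sstar : Set (Fin p))} := fun ω hω => by
    change Shat ω ⊆ _
    rw [hShat ω]
    exact ite_biInter_nonrejected_subset R (fun S => (S : Set (Fin p))) hω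
  calc 1 - α ≤ 1 - (ℙ (R Sstar)).toReal := by linarith
    _ ≤ (ℙ (R Sstar)ᶜ).toReal := one_sub_toReal_measure_le_toReal_measure_compl ℙ _
    _ ≤ _ := measureReal_mono hsub

/-- Invariant Causal Prediction controls false positive causal selections: if the invariance test
for the true causal set `S*` is valid at level `α`, i.e. `ℙ(R_{S*}) ≤ α`, then the intersection
`Ŝ(ω)` of all non-rejected sets (defined as `∅` when every set is rejected) satisfies
`ℙ(Ŝ ⊆ S*) ≥ 1 - α`. -/
theorem icp_false_positive_control
    {Ω : Type*} [MeasureSpace Ω] [IsProbabilityMeasure (ℙ : Measure Ω)]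
    (p : ℕ) (hp : 1 ≤ p)
    (R : Finset (Fin p) → Set Ω) (hRmeas : ∀ S, MeasurableSet (R S))
    (Sstar : Finset (Fin p))
    (α : ℝ) (hα : α ∈ Set.Ioo (0 : ℝ) 1)
    (hvalid : (ℙ (R Sstar)).toReal ≤ α)
    (Shat : Ω → Set (Fin p))
    (hShat : ∀ ω, Shat ω =
      if ∀ S : Finset (Fin p), ω ∈ R S then (∅ : Set (Fin p))
      else ⋂ S ∈ {S : Finset (Fin p) | ω ∉ R S}, (S : Set (Fin p))) :
    1 - α ≤ (ℙ {ω | Shat ω ⊆ (Sstar : Set (Fin p))}).toReal :=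
  icp_false_positive_control_general p R Sstar α hvalid Shat hShat
end

section
/- Causal variables yield invariant conditional distributions across environments: for every environment e, the conditional distribution of Y^e given X^e is (for law(X^e)-almost every x) the pushforward of μ_ε under t ↦ f(x, t); in particular, this conditional distribution (as a Markov kernel from ℝ^p to ℝ) does not depend on e. -/
/-!
Independence of `X` and `ε` makes the joint law of `(X, ε)` the product `law X ⊗ law ε`.
Pushing it forward along `(x, t) ↦ (x, f (x, t))` shows that `(X, f (X, ε))` has law
`law X ⊗ₘ κ` with `κ x = (law ε).map (f (x, ·))`, and the conditional distribution is
a.e. determined by this disintegration. Since `κ` only involves `f` and the common noise law,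
it is the same in every environment.
-/

open MeasureTheory ProbabilityTheory

namespace ProbabilityTheory

variable {Ω α β γ : Type*} {mΩ : MeasurableSpace Ω} {mα : MeasurableSpace α}
  {mβ : MeasurableSpace β} {mγ : MeasurableSpace γ}

lemma Kernel.map_id_prod_apply (η : Kernel α β) [IsSFiniteKernel η] {g : α × β → γ}
    (hg : Measurable g) (x : α) :
    ((Kernel.id ×ₖ η).map g) x = (η x).map (fun t => g (x, t)) := by
  rw [Kernel.map_apply _ hg, Kernel.prod_apply, Kernel.id_apply, Measure.dirac_prod,
    Measure.map_map hg measurable_prodMk_left]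
  rfl

lemma Measure.compProd_map_id_prod (μ : Measure α) [SFinite μ] (η : Kernel α β)
    [IsSFiniteKernel η] {g : α × β → γ} (hg : Measurable g) :
    μ ⊗ₘ (Kernel.id ×ₖ η).map g = (μ ⊗ₘ η).map (fun q => (q.1, g q)) := by
  have hg' : Measurable (fun q : α × β => (q.1, g q)) := measurable_fst.prodMk hg
  ext s hs
  rw [Measure.compProd_apply hs, Measure.map_apply hg' hs, Measure.compProd_apply (hg' hs)]
  refine lintegral_congr fun x => ?_
  rw [Kernel.map_id_prod_apply η hg x,
    Measure.map_apply (by fun_prop) (measurable_prodMk_left hs)]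
  rfl

lemma IndepFun.map_prodMk_eq_compProd_const {μ : Measure Ω} [IsFiniteMeasure μ] {X : Ω → α}
    {ε : Ω → β} (hX : AEMeasurable X μ) (hε : AEMeasurable ε μ) (h : IndepFun X ε μ) :
    μ.map (fun ω => (X ω, ε ω)) = μ.map X ⊗ₘ Kernel.const α (μ.map ε) := by
  rw [Measure.compProd_const]
  exact (indepFun_iff_map_prod_eq_prod_map_map hX hε).mp h

lemma IndepFun.map_prodMk_comp_eq_compProd {μ : Measure Ω} [IsFiniteMeasure μ] {X : Ω → α}
    {ε : Ω → β} (hX : AEMeasurable X μ) (hε : AEMeasurable ε μ) (h : IndepFun X ε μ)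
    {f : α × β → γ} (hf : Measurable f) :
    μ.map (fun ω => (X ω, f (X ω, ε ω)))
      = μ.map X ⊗ₘ (Kernel.id ×ₖ Kernel.const α (μ.map ε)).map f := by
  rw [Measure.compProd_map_id_prod _ _ hf, ← h.map_prodMk_eq_compProd_const hX hε,
    AEMeasurable.map_map_of_aemeasurable (measurable_fst.prodMk hf).aemeasurable
      (hX.prodMk hε)]
  rfl

theorem IndepFun.condDistrib_ae_eq_map {μ : Measure Ω} [IsFiniteMeasure μ] {X : Ω → α}
    {ε : Ω → β} [StandardBorelSpace γ] [Nonempty γ] (hX : AEMeasurable X μ)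
    (hε : AEMeasurable ε μ) (h : IndepFun X ε μ) {f : α × β → γ} (hf : Measurable f) :
    ∀ᵐ x ∂μ.map X,
      condDistrib (fun ω => f (X ω, ε ω)) X μ x = (μ.map ε).map (fun t => f (x, t)) := by
  filter_upwards [condDistrib_ae_eq_of_measure_eq_compProd (Y := fun ω => f (X ω, ε ω)) X
    (by fun_prop) (h.map_prodMk_comp_eq_compProd hX hε hf)] with x hx
  rw [hx, Kernel.map_id_prod_apply _ hf, Kernel.const_apply]

end ProbabilityTheory

theorem invariance_of_causal_conditional_general
    {Ω : Type*} [MeasureSpace Ω] [IsProbabilityMeasure (ℙ : Measure Ω)]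
    {E : Type*} (p : ℕ)
    (X : E → Ω → (Fin p → ℝ)) (ε : E → Ω → ℝ)
    (f : (Fin p → ℝ) × ℝ → ℝ) (hf : Measurable f)
    (με : Measure ℝ)
    (hXmeas : ∀ e, Measurable (X e)) (hεmeas : ∀ e, Measurable (ε e))
    (hIndep : ∀ e, IndepFun (X e) (ε e) ℙ)
    (hLaw : ∀ e, Measure.map (ε e) ℙ = με)
    (Y : E → Ω → ℝ) (hY : ∀ e ω, Y e ω = f (X e ω, ε e ω)) :
    ∀ e, ∀ᵐ x ∂(Measure.map (X e) ℙ),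
      condDistrib (Y e) (X e) ℙ x = Measure.map (fun t => f (x, t)) με := by
  intro e
  have hYe : Y e = fun ω => f (X e ω, ε e ω) := funext (hY e)
  rw [hYe, ← hLaw e]
  exact (hIndep e).condDistrib_ae_eq_map (hXmeas e).aemeasurable (hεmeas e).aemeasurable hf

/-- Causal variables yield invariant conditional distributions: if `Y^e = f(X^e, ε^e)` with
`ε^e` independent of `X^e` and all `ε^e` having the same law `με`, then for every environment
`e` the conditional distribution of `Y^e` given `X^e = x` is, for `law(X^e)`-a.e. `x`, the
pushforward of `με` under `t ↦ f (x, t)`; in particular this kernel does not depend on `e`. -/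
theorem invariance_of_causal_conditional
    {Ω : Type*} [MeasureSpace Ω] [IsProbabilityMeasure (ℙ : Measure Ω)]
    {E : Type*} (p : ℕ)
    (X : E → Ω → (Fin p → ℝ)) (ε : E → Ω → ℝ)
    (f : (Fin p → ℝ) × ℝ → ℝ) (hf : Measurable f)
    (με : Measure ℝ) [IsProbabilityMeasure με]
    (hXmeas : ∀ e, Measurable (X e)) (hεmeas : ∀ e, Measurable (ε e))
    (hIndep : ∀ e, IndepFun (X e) (ε e) ℙ)
    (hLaw : ∀ e, Measure.map (ε e) ℙ = με)
    (Y : E → Ω → ℝ) (hY : ∀ e ω, Y e ω = f (X e ω, ε e ω)) :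
    ∀ e, ∀ᵐ x ∂(Measure.map (X e) ℙ),
      condDistrib (Y e) (X e) ℙ x = Measure.map (fun t => f (x, t)) με :=
  invariance_of_causal_conditional_general p X ε f hf με hXmeas hεmeas hIndep hLaw Y hY
end

section
/- Under the stated Gaussian structure, the conditional mean squared error E[R² | 𝒢] has the same distribution as σ₁² + σ₂² W² where W is standard Gaussian; equivalently, the law of E[R² | 𝒢] is the pushforward of the standard Gaussian measure on ℝ under w ↦ σ₁² + σ₂² w². Consequently, for every α ∈ (0,1), the α-quantile of E[R² | 𝒢] equals σ₁² + σ₂² · q_α, where q_α is the α-quantile of the χ²₁ distribution (the law of W²). -/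
/-! Write `R = U + V` with `V = R - U`. Since `U` is `𝒢`-measurable and `V` is independent of `𝒢`,
expanding the square and pulling out `U` gives `E[R² | 𝒢] = U² + 2 U E[V] + E[V²] = σ₁² + U²`,
because `E[V] = 0` by the tower property. As `U` has the law of `σ₂ W`, the law of `E[R² | 𝒢]` is that
of `σ₁² + σ₂² W²`; and quantiles commute with the increasing affine map `x ↦ σ₁² + σ₂² x`. -/

open MeasureTheory ProbabilityTheory

/-- The `α`-quantile of a real distribution `μ`: the generalized inverse of the cdf. -/
noncomputable def lawQuantile (μ : MeasureTheory.Measure ℝ) (a : ℝ) : ℝ :=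
  sInf {x : ℝ | a ≤ (μ (Set.Iic x)).toReal}

open Filter

namespace ProbabilityTheory

variable {Ω β : Type*} {m m0 : MeasurableSpace Ω} {P : Measure Ω} [mβ : MeasurableSpace β]

lemma Indep.comap_congr_ae {V V' : Ω → β} (h : Indep (mβ.comap V) m P) (hV : V =ᵐ[P] V') :
    Indep (mβ.comap V') m P := by
  -- `m` is the σ-algebra generated by `id : Ω → (Ω, m)`, so this is `IndepFun.congr`.
  have hid : m.comap id = m := MeasurableSpace.comap_id
  have hVid : @IndepFun Ω β Ω m0 mβ m V id P :=
    (IndepFun_iff_Indep (mγ := m) V id P).2 (by rwa [hid])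
  simpa only [hid] using (IndepFun_iff_Indep (mγ := m) V' id P).1 (hVid.congr hV .rfl)

lemma condExp_comp_of_indep [IsProbabilityMeasure P] {E : Type*} [NormedAddCommGroup E]
    [NormedSpace ℝ E] [CompleteSpace E] (hm : m ≤ m0) {V : Ω → β} (hV : AEMeasurable V P)
    {φ : β → E} (hφ : StronglyMeasurable φ) (hind : Indep (mβ.comap V) m P) :
    P[fun ω => φ (V ω) | m] =ᵐ[P] fun _ => ∫ ω, φ (V ω) ∂P := by
  have hφV : (fun ω => φ (V ω)) =ᵐ[P] fun ω => φ (hV.mk V ω) := hV.ae_eq_mk.fun_comp φ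
  calc P[fun ω => φ (V ω) | m]
      =ᵐ[P] P[fun ω => φ (hV.mk V ω) | m] := condExp_congr_ae hφV
    _ =ᵐ[P] fun _ => ∫ ω, φ (hV.mk V ω) ∂P :=
      condExp_indep_eq hV.measurable_mk.comap_le hm
        (hφ.comp_measurable (comap_measurable _)) (hind.comap_congr_ae hV.ae_eq_mk)
    _ = fun _ => ∫ ω, φ (V ω) ∂P := by rw [integral_congr_ae hφV]

lemma condExp_add_sq_of_indep [IsProbabilityMeasure P] (hm : m ≤ m0) {U V : Ω → ℝ}
    (hU : StronglyMeasurable[m] U) (hU2 : MemLp U 2 P) (hV2 : MemLp V 2 P)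
    (hind : Indep (MeasurableSpace.comap V inferInstance) m P) :
    P[fun ω => (U ω + V ω) ^ 2 | m]
      =ᵐ[P] fun ω => U ω ^ 2 + 2 * U ω * ∫ ω, V ω ∂P + ∫ ω, V ω ^ 2 ∂P := by
  have hV : AEMeasurable V P := hV2.aestronglyMeasurable.aemeasurable
  have hUV : Integrable ((fun ω => 2 * U ω) * V) P := (hU2.const_mul 2).integrable_mul hV2
  have hexpand : (fun ω => (U ω + V ω) ^ 2)
      = (fun ω => U ω ^ 2) + ((fun ω => 2 * U ω) * V + fun ω => V ω ^ 2) := by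
    ext ω; simp only [Pi.add_apply, Pi.mul_apply]; ring
  have hU_sq : P[fun ω => U ω ^ 2 | m] = fun ω => U ω ^ 2 :=
    condExp_of_stronglyMeasurable hm (hU.pow 2) hU2.integrable_sq
  have hpull : P[(fun ω => 2 * U ω) * V | m] =ᵐ[P] (fun ω => 2 * U ω) * P[V | m] :=
    condExp_mul_of_stronglyMeasurable_left (hU.const_mul 2) hUV (hV2.integrable one_le_two)
  have hV_mean := condExp_comp_of_indep hm hV stronglyMeasurable_id hind
  have hV_sq := condExp_comp_of_indep hm hV (continuous_pow 2).stronglyMeasurable hind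
  rw [hexpand]
  filter_upwards [condExp_add hU2.integrable_sq (hUV.add hV2.integrable_sq) m,
    condExp_add hUV hV2.integrable_sq m, hpull, hV_mean, hV_sq] with ω h₁ h₂ h₃ h₄ h₅
  simp only [Pi.add_apply, Pi.mul_apply, id] at h₁ h₂ h₃ h₄ h₅ ⊢
  rw [h₁, h₂, h₃, h₄, h₅, hU_sq]
  ring

end ProbabilityTheory

lemma lawQuantile_eq_sInf_cdf (μ : Measure ℝ) [IsProbabilityMeasure μ] (a : ℝ) :
    lawQuantile μ a = sInf {x | a ≤ cdf μ x} := by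
  simp only [lawQuantile, cdf_eq_real, measureReal_def]

lemma nonempty_setOf_le_cdf (μ : Measure ℝ) [IsProbabilityMeasure μ] {a : ℝ} (ha : a < 1) :
    {x | a ≤ cdf μ x}.Nonempty :=
  ((tendsto_cdf_atTop μ).eventually (eventually_ge_nhds ha)).exists

lemma bddBelow_setOf_le_cdf (μ : Measure ℝ) [IsProbabilityMeasure μ] {a : ℝ} (ha : 0 < a) :
    BddBelow {x | a ≤ cdf μ x} := by
  obtain ⟨x₀, hx₀⟩ := ((tendsto_cdf_atBot μ).eventually (eventually_lt_nhds ha)).exists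
  exact ⟨x₀, fun x hx => le_of_not_ge fun hxx₀ => (hx.trans (monotone_cdf μ hxx₀)).not_gt hx₀⟩

lemma cdf_map_orderIso (μ : Measure ℝ) [IsProbabilityMeasure μ] (e : ℝ ≃o ℝ) (x : ℝ) :
    cdf (μ.map e) x = cdf μ (e.symm x) := by
  have := Measure.isProbabilityMeasure_map (μ := μ) e.continuous.aemeasurable
  rw [cdf_eq_real, cdf_eq_real, map_measureReal_apply e.continuous.measurable measurableSet_Iic,
    e.preimage_Iic]

lemma lawQuantile_map_orderIso (μ : Measure ℝ) [IsProbabilityMeasure μ] (e : ℝ ≃o ℝ) {a : ℝ}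
    (ha : a ∈ Set.Ioo 0 1) : lawQuantile (μ.map e) a = e (lawQuantile μ a) := by
  have := Measure.isProbabilityMeasure_map (μ := μ) e.continuous.aemeasurable
  simp only [lawQuantile_eq_sInf_cdf, cdf_map_orderIso]
  rw [e.map_csInf' (nonempty_setOf_le_cdf μ ha.2) (bddBelow_setOf_le_cdf μ ha.1),
    e.image_eq_preimage_symm]
  rfl

lemma lawQuantile_map_add_mul (μ : Measure ℝ) [IsProbabilityMeasure μ] {c k a : ℝ} (hk : 0 < k)
    (ha : a ∈ Set.Ioo 0 1) :
    lawQuantile (μ.map fun x => c + k * x) a = c + k * lawQuantile μ a :=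
  lawQuantile_map_orderIso μ ((OrderIso.mulLeft₀ k hk).trans (OrderIso.addLeft c)) ha

lemma gaussianReal_zero_eq_map_const_mul (σ : ℝ) :
    gaussianReal 0 (σ ^ 2).toNNReal = (gaussianReal 0 1).map (σ * ·) := by
  rw [gaussianReal_map_const_mul, mul_zero, mul_one]
  congr
  ext
  simp [Real.coe_toNNReal _ (sq_nonneg σ)]

lemma gaussianReal_map_add_sq (σ c : ℝ) :
    (gaussianReal 0 (σ ^ 2).toNNReal).map (fun u => c + u ^ 2)
      = (gaussianReal 0 1).map (fun w => c + σ ^ 2 * w ^ 2) := by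
  rw [gaussianReal_zero_eq_map_const_mul, Measure.map_map (by fun_prop) (by fun_prop)]
  simp only [Function.comp_def, mul_pow]

theorem condexp_sq_law_and_quantile_general
    {Ω : Type*} [m0 : MeasurableSpace Ω] (P : Measure Ω) [IsProbabilityMeasure P]
    (𝒢 : {m : MeasurableSpace Ω // m ≤ m0})
    (R : Ω → ℝ) (hR2 : MemLp R 2 P)
    (U : Ω → ℝ) (hU : U = P[R | 𝒢.1])
    (σ₁ σ₂ : ℝ) (hσ₂ : 0 < σ₂)
    (hUlaw : Measure.map U P = gaussianReal 0 (Real.toNNReal (σ₂ ^ 2)))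
    (hIndep : @Indep Ω (MeasurableSpace.comap (fun ω => R ω - U ω) inferInstance) 𝒢.1 m0 P)
    (hVar : ∫ ω, (R ω - U ω) ^ 2 ∂P = σ₁ ^ 2) :
    Measure.map (P[fun ω => R ω ^ 2 | 𝒢.1]) P
        = Measure.map (fun w => σ₁ ^ 2 + σ₂ ^ 2 * w ^ 2) (gaussianReal 0 1) ∧
      ∀ a ∈ Set.Ioo (0 : ℝ) 1,
        lawQuantile (Measure.map (P[fun ω => R ω ^ 2 | 𝒢.1]) P) a
          = σ₁ ^ 2 + σ₂ ^ 2 * lawQuantile (Measure.map (fun w => w ^ 2) (gaussianReal 0 1)) a := by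
  have hUm : StronglyMeasurable[𝒢.1] U := hU ▸ stronglyMeasurable_condExp
  have hU2 : MemLp U 2 P := hU ▸ hR2.condExp one_le_two
  have hmean : ∫ ω, (R ω - U ω) ∂P = 0 := by
    rw [integral_sub (hR2.integrable one_le_two) (hU2.integrable one_le_two), hU,
      integral_condExp 𝒢.2, sub_self]
  have hcond : P[fun ω => R ω ^ 2 | 𝒢.1] =ᵐ[P] fun ω => σ₁ ^ 2 + U ω ^ 2 := by
    filter_upwards [condExp_add_sq_of_indep 𝒢.2 hUm hU2 (hR2.sub hU2) hIndep] with ω h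
    simp only [Pi.sub_apply, add_sub_cancel, hmean, hVar] at h
    rw [h]
    ring
  have hlaw : Measure.map (P[fun ω => R ω ^ 2 | 𝒢.1]) P
      = Measure.map (fun w => σ₁ ^ 2 + σ₂ ^ 2 * w ^ 2) (gaussianReal 0 1) := by
    rw [Measure.map_congr hcond, ← gaussianReal_map_add_sq, ← hUlaw,
      Measure.map_map (by fun_prop) (hUm.mono 𝒢.2).measurable]
    rfl
  refine ⟨hlaw, fun a ha => ?_⟩
  have : IsProbabilityMeasure ((gaussianReal 0 1).map (· ^ 2)) :=
    Measure.isProbabilityMeasure_map (by fun_prop)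
  rw [hlaw, ← lawQuantile_map_add_mul _ (by positivity) ha,
    Measure.map_map (by fun_prop) (by fun_prop)]
  rfl

/-- In-sample quantile characterization of causal regularization: if `U = E[R | 𝒢]` is
`N(0, σ₂²)`-distributed, `R - U` is independent of `𝒢` with `E[(R - U)²] = σ₁²`, then
`E[R² | 𝒢]` has the law of `σ₁² + σ₂² W²` for `W` standard Gaussian, and for every
`α ∈ (0,1)` its `α`-quantile equals `σ₁² + σ₂² · q_α` with `q_α` the `α`-quantile of `χ²₁`
(the law of `W²`). -/
theorem condexp_sq_law_and_quantile
    {Ω : Type*} [m0 : MeasurableSpace Ω] (P : Measure Ω) [IsProbabilityMeasure P]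
    (𝒢 : {m : MeasurableSpace Ω // m ≤ m0})
    (R : Ω → ℝ) (hR2 : MemLp R 2 P)
    (U : Ω → ℝ) (hU : U = P[R | 𝒢.1])
    (σ₁ σ₂ : ℝ) (hσ₁ : 0 ≤ σ₁) (hσ₂ : 0 < σ₂)
    (hUlaw : Measure.map U P = gaussianReal 0 (Real.toNNReal (σ₂ ^ 2)))
    (hIndep : @Indep Ω (MeasurableSpace.comap (fun ω => R ω - U ω) inferInstance) 𝒢.1 m0 P)
    (hVar : ∫ ω, (R ω - U ω) ^ 2 ∂P = σ₁ ^ 2) :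
    Measure.map (P[fun ω => R ω ^ 2 | 𝒢.1]) P
        = Measure.map (fun w => σ₁ ^ 2 + σ₂ ^ 2 * w ^ 2) (gaussianReal 0 1) ∧
      ∀ a ∈ Set.Ioo (0 : ℝ) 1,
        lawQuantile (Measure.map (P[fun ω => R ω ^ 2 | 𝒢.1]) P) a
          = σ₁ ^ 2 + σ₂ ^ 2 * lawQuantile (Measure.map (fun w => w ^ 2) (gaussianReal 0 1)) a :=
  condexp_sq_law_and_quantile_general (m0 := m0) P 𝒢 R hR2 U hU σ₁ σ₂ hσ₂ hUlaw hIndep hVar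
end
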